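/- The Helfrich stored energy function W(ψ) = (k_c/2 (2H(ψ)+c₀)² + k̄ K(ψ) + λ)√(a(ψ)), with k_c > 0, k̄, c₀, λ ∈ ℝ, is polyconvex in the sense that there exists a convex function 𝕎 on the convex set N := {(a,b,c) ∈ ℝ³ : a - |b| > 0, a - 2|b| + c > 0} such that W(ψ) = 𝕎(√(a(ψ)), εH(ψ)√(a(ψ)), ε²K(ψ)√(a(ψ))). Explicitly, the function 𝕎(a,b,c) := (k_c/2)(2b/ε + c₀ a)²/a + (k̄/ε²) c + λ a is convex on {(a,b,c) ∈ ℝ³ : a > 0}. -/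

import Mathlib

/-!
The only nonlinear term of `𝕎` is `k_c/2` times the perspective `(x, y) ↦ y² / x` of the square,
precomposed with the linear map `(a, b, c) ↦ (a, 2b/ε + c₀ a)`. The perspective is convex on
`x > 0` by Sedrakyan's inequality `(u + v)² / (x + y) ≤ u² / x + v² / y`, applied to the scaled
points `s • p` and `t • q`, whose quotients are `s (p₂² / p₁)` and `t (q₂² / q₁)`. The identity
`W = 𝕎(√a, εH√a, ε²K√a)` is algebra: `ε` and `√a` cancel.
-/

theorem add_sq_div_add_le {u v x y : ℝ} (hx : 0 < x) (hy : 0 < y) :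
    (u + v) ^ 2 / (x + y) ≤ u ^ 2 / x + v ^ 2 / y := by
  simpa [Fin.sum_univ_two] using Finset.sq_sum_div_le_sum_sq_div Finset.univ ![u, v]
    (g := ![x, y]) (by simp [Fin.forall_fin_two, hx, hy])

theorem convexOn_sq_div : ConvexOn ℝ {p : ℝ × ℝ | 0 < p.1} fun p => p.2 ^ 2 / p.1 := by
  refine convexOn_iff_forall_pos.2 ⟨convex_halfSpace_gt (LinearMap.fst ℝ ℝ ℝ).isLinear 0, ?_⟩
  rintro p (hp : 0 < p.1) q (hq : 0 < q.1) s t hs ht -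
  have scale : ∀ (c : ℝ) (r : ℝ × ℝ), 0 < c → (c * r.2) ^ 2 / (c * r.1) = c * (r.2 ^ 2 / r.1) :=
    fun c r hc => by rw [mul_pow, sq c, mul_assoc, mul_div_mul_left _ _ hc.ne', mul_div_assoc]
  simpa only [Prod.fst_add, Prod.snd_add, Prod.smul_fst, Prod.smul_snd, smul_eq_mul,
    scale s p hs, scale t q ht] using
    add_sq_div_add_le (u := s * p.2) (v := t * q.2) (mul_pos hs hp) (mul_pos ht hq)

theorem convexOn_sq_div_linearMap {E : Type*} [AddCommGroup E] [Module ℝ E] (f g : E →ₗ[ℝ] ℝ) :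
    ConvexOn ℝ {x | 0 < f x} fun x => g x ^ 2 / f x :=
  convexOn_sq_div.comp_linearMap (f.prod g)

noncomputable def helfrichDensity (kc kbar c₀ lam ε : ℝ) (p : ℝ × ℝ × ℝ) : ℝ :=
  kc / 2 * (2 * p.2.1 / ε + c₀ * p.1) ^ 2 / p.1 + kbar / ε ^ 2 * p.2.2 + lam * p.1

theorem convexOn_helfrichDensity {kc : ℝ} (hkc : 0 ≤ kc) (kbar c₀ lam ε : ℝ) :
    ConvexOn ℝ {p : ℝ × ℝ × ℝ | 0 < p.1} (helfrichDensity kc kbar c₀ lam ε) := by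
  let a : ℝ × ℝ × ℝ →ₗ[ℝ] ℝ := LinearMap.fst ℝ ℝ (ℝ × ℝ)
  let b : ℝ × ℝ × ℝ →ₗ[ℝ] ℝ := LinearMap.fst ℝ ℝ ℝ ∘ₗ LinearMap.snd ℝ ℝ (ℝ × ℝ)
  let c : ℝ × ℝ × ℝ →ₗ[ℝ] ℝ := LinearMap.snd ℝ ℝ ℝ ∘ₗ LinearMap.snd ℝ ℝ (ℝ × ℝ)
  have hquad := (convexOn_sq_div_linearMap a ((2 / ε) • b + c₀ • a)).smul (c := kc / 2)
    (by positivity)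
  have hlin := (kbar / ε ^ 2) • c + lam • a |>.convexOn hquad.1
  refine (hquad.add hlin).congr fun p _ => ?_
  simp only [LinearMap.add_apply, LinearMap.smul_apply, LinearMap.coe_comp, LinearMap.coe_fst,
    LinearMap.coe_snd, Function.comp_apply, smul_eq_mul, LinearMap.fst_apply, Pi.add_apply,
    helfrichDensity, a, b, c]
  ring

theorem helfrichDensity_apply {ε : ℝ} (hε : ε ≠ 0) (kc kbar c₀ lam : ℝ) {sa : ℝ} (hsa : 0 < sa)
    (H K : ℝ) :
    helfrichDensity kc kbar c₀ lam ε (sa, ε * H * sa, ε ^ 2 * K * sa)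
      = (kc / 2 * (2 * H + c₀) ^ 2 + kbar * K + lam) * sa := by
  unfold helfrichDensity
  field_simp

/-- The Helfrich stored energy function
`W(ψ) = (k_c/2 (2H+c₀)² + k̄ K + λ)√a` is polyconvex: the explicit function
`𝕎(a,b,c) := (k_c/2)(2b/ε + c₀ a)²/a + (k̄/ε²) c + λ a` is convex on `{a > 0}` (which
contains the set `N`), and `W = 𝕎(√a, εH√a, ε²K√a)`. -/
theorem stmt11 (kc kbar c₀ lam ε : ℝ) (hkc : 0 < kc) (hε : 0 < ε) :
    ∃ W : ℝ × ℝ × ℝ → ℝ,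
      (∀ p : ℝ × ℝ × ℝ,
        W p = kc / 2 * (2 * p.2.1 / ε + c₀ * p.1) ^ 2 / p.1 + kbar / ε ^ 2 * p.2.2 + lam * p.1) ∧
      ConvexOn ℝ {p : ℝ × ℝ × ℝ | 0 < p.1} W ∧
      ∀ sa H K : ℝ, 0 < sa →
        (kc / 2 * (2 * H + c₀) ^ 2 + kbar * K + lam) * sa
          = W (sa, ε * H * sa, ε ^ 2 * K * sa) :=
  ⟨helfrichDensity kc kbar c₀ lam ε, fun _ => rfl, convexOn_helfrichDensity hkc.le kbar c₀ lam ε,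
    fun _ H K hsa => (helfrichDensity_apply hε.ne' kc kbar c₀ lam hsa H K).symm⟩
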